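/- arXiv:2003.00436 — 2 statements merged into one kernel-verified Lean document; each statement's English description precedes it below -/
import Mathlib

section
/- Let f : ℝ^d → ℝ^ℓ be a locally bounded measurable function and let N_f be the (Lebesgue-null) complement of its set of points of approximate continuity. Then for every x̄ ∈ ℝ^d and every δ > 0 it holds: clco f(B_δ(x̄) \ N_f) = ⋂_{N Lebesgue-null} clco f(B_δ(x̄) \ N), where the intersection is taken over all Lebesgue-null sets N ⊆ ℝ^d. -/
/-!
Almost every point is a point of approximate continuity (Lebesgue differentiation plus Markov's
inequality), so `N_f` is itself one of the null sets in the intersection. Conversely, if `x` is a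
point of approximate continuity, then near `x` the points `y` with `f y` close to `f x` have
positive density, so they cannot all lie in a null set `N`: hence `f x` lies in the closure of
`f (B \ N)` for every null `N`.
-/

open MeasureTheory Metric Filter Set Topology

noncomputable section

/-- `ℝ^n` with the Euclidean structure. -/
abbrev Euc (n : ℕ) : Type := EuclideanSpace ℝ (Fin n)

/-- Closed convex hull of a set. -/
def clco {n : ℕ} (A : Set (Euc n)) : Set (Euc n) := closure (convexHull ℝ A)

/-- A function is locally bounded. -/
def LocBdd {d l : ℕ} (f : Euc d → Euc l) : Prop :=
  ∀ x : Euc d, ∃ δ > (0 : ℝ), ∃ C : ℝ, ∀ y ∈ Metric.ball x δ, ‖f y‖ ≤ C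

/-- The Filippov regularization of `f`. -/
def FilippovReg {d l : ℕ} (f : Euc d → Euc l) (x : Euc d) : Set (Euc l) :=
  ⋂ (N : Set (Euc d)) (_ : volume N = 0) (δ : ℝ) (_ : 0 < δ),
    clco (f '' (Metric.ball x δ \ N))

/-- The Krasovskii regularization of `f`. -/
def KrasovskiiReg {d l : ℕ} (f : Euc d → Euc l) (x : Euc d) : Set (Euc l) :=
  ⋂ (δ : ℝ) (_ : 0 < δ), clco (f '' Metric.ball x δ)

/-- A set-valued map is cusco: upper semicontinuous with nonempty compact convex values. -/
def IsCusco {d l : ℕ} (Φ : Euc d → Set (Euc l)) : Prop :=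
  (∀ x : Euc d, ∀ U : Set (Euc l), IsOpen U → Φ x ⊆ U →
      ∃ δ > (0 : ℝ), ∀ y ∈ Metric.ball x δ, Φ y ⊆ U) ∧
  ∀ x : Euc d, (Φ x).Nonempty ∧ IsCompact (Φ x) ∧ Convex ℝ (Φ x)

/-- The "minimal" map `m(Φ)` associated to a set-valued map `Φ`. -/
def mPhi {d l : ℕ} (Φ : Euc d → Set (Euc l)) (x : Euc d) : Set (Euc l) :=
  ⋂ (N : Set (Euc d)) (_ : volume N = 0) (δ : ℝ) (_ : 0 < δ),
    clco (⋃ a ∈ Metric.ball x δ \ N, Φ a)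

/-- A point of approximate continuity of `f`. -/
def ApproxContAt {d l : ℕ} (f : Euc d → Euc l) (x : Euc d) : Prop :=
  ∀ ε > (0 : ℝ),
    Tendsto (fun δ : ℝ =>
        volume {y ∈ Metric.ball x δ | ε ≤ ‖f y - f x‖} / volume (Metric.ball x δ))
      (𝓝[>] 0) (𝓝 0)

/-- A cusco map is Filippov representable if it is the Filippov regularization
of some locally bounded measurable function. -/
def FilippovRepresentable {d l : ℕ} (Φ : Euc d → Set (Euc l)) : Prop :=
  ∃ f : Euc d → Euc l, Measurable f ∧ LocBdd f ∧ ∀ x, Φ x = FilippovReg f x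

section AddHaar

variable {E F : Type*} [NormedAddCommGroup E] [NormedSpace ℝ E] [FiniteDimensional ℝ E]
  [MeasurableSpace E] [BorelSpace E] {μ : Measure E} [μ.IsAddHaarMeasure] [NormedAddCommGroup F]

theorem addHaar_ball_eq_addHaar_closedBall (x : E) {r : ℝ} (hr : 0 < r) :
    μ (ball x r) = μ (closedBall x r) := by
  rcases subsingleton_or_nontrivial E with hE | hE
  · rw [Subsingleton.eq_univ_of_nonempty ⟨x, mem_ball_self hr⟩,
      Subsingleton.eq_univ_of_nonempty ⟨x, mem_closedBall_self hr.le⟩]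
  · exact (Measure.addHaar_closedBall_eq_addHaar_ball μ x r).symm

theorem measure_setOf_le_norm_sub_div_le {f : E → F} (hf : AEStronglyMeasurable f μ) (x : E)
    {r ε : ℝ} (hr : 0 < r) (hε : 0 < ε) :
    μ {y ∈ ball x r | ε ≤ ‖f y - f x‖} / μ (ball x r) ≤
      (∫⁻ y in closedBall x r, ‖f y - f x‖ₑ ∂μ) / μ (closedBall x r) / ENNReal.ofReal ε := by
  have hmarkov : μ {y ∈ ball x r | ε ≤ ‖f y - f x‖} ≤
      (∫⁻ y in closedBall x r, ‖f y - f x‖ₑ ∂μ) / ENNReal.ofReal ε := by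
    have hsub : {y ∈ ball x r | ε ≤ ‖f y - f x‖} ⊆
        {y | ENNReal.ofReal ε ≤ ‖f y - f x‖ₑ} ∩ closedBall x r := fun y hy =>
      ⟨by rw [mem_ofPred_eq, ← ofReal_norm]; exact ENNReal.ofReal_le_ofReal hy.2,
        ball_subset_closedBall hy.1⟩
    exact ((measure_mono hsub).trans (Measure.le_restrict_apply _ _)).trans
      (meas_ge_le_lintegral_div (hf.sub aestronglyMeasurable_const).enorm.restrict
        (by simpa using hε) ENNReal.ofReal_ne_top)
  rw [addHaar_ball_eq_addHaar_closedBall x hr, ENNReal.div_right_comm]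
  exact ENNReal.div_le_div_right hmarkov _

theorem ae_tendsto_measure_setOf_le_norm_sub_div {f : E → F} (hf : LocallyIntegrable f μ) :
    ∀ᵐ x ∂μ, ∀ ε > (0 : ℝ), Tendsto (fun r => μ {y ∈ ball x r | ε ≤ ‖f y - f x‖} / μ (ball x r))
      (𝓝[>] 0) (𝓝 0) := by
  filter_upwards [(Besicovitch.vitaliFamily μ).ae_tendsto_lintegral_enorm_sub_div hf] with x hx ε hε
  have hlim := ENNReal.Tendsto.div_const (hx.comp (Besicovitch.tendsto_filterAt μ x))
    (b := ENNReal.ofReal ε) (Or.inr (by simpa using hε))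
  rw [ENNReal.zero_div] at hlim
  refine tendsto_of_tendsto_of_tendsto_of_le_of_le' tendsto_const_nhds hlim
    (Eventually.of_forall fun _ => zero_le) ?_
  filter_upwards [self_mem_nhdsWithin] with r hr
  exact measure_setOf_le_norm_sub_div_le hf.aestronglyMeasurable x hr hε

end AddHaar

section Euclidean

variable {d l : ℕ} {f : Euc d → Euc l}

theorem LocBdd.locallyIntegrable (hmeas : Measurable f) (hbdd : LocBdd f) :
    LocallyIntegrable f volume := by
  intro x
  obtain ⟨r, hr, C, hC⟩ := hbdd x
  refine ⟨ball x r, ball_mem_nhds x hr, Measure.integrableOn_of_bounded (M := C)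
    measure_ball_lt_top.ne hmeas.aestronglyMeasurable ?_⟩
  exact (ae_restrict_iff' measurableSet_ball).2 (Eventually.of_forall hC)

theorem ae_approxContAt (hf : LocallyIntegrable f volume) : ∀ᵐ x, ApproxContAt f x :=
  ae_tendsto_measure_setOf_le_norm_sub_div hf

theorem ApproxContAt.exists_mem_ball_diff_dist_lt {x : Euc d} (hx : ApproxContAt f x)
    {N : Set (Euc d)} (hN : volume N = 0) {r ε : ℝ} (hr : 0 < r) (hε : 0 < ε) :
    ∃ y ∈ ball x r \ N, dist (f y) (f x) < ε := by
  obtain ⟨t, hratio, htr, ht⟩ := ((hx ε hε).eventually_lt_const zero_lt_one).and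
    ((eventually_nhdsWithin_of_eventually_nhds (eventually_lt_nhds hr)).and
      self_mem_nhdsWithin) |>.exists
  set bad := {y ∈ ball x t | ε ≤ ‖f y - f x‖}
  have hbad : volume bad < volume (ball x t) := by
    simpa using (ENNReal.div_lt_iff (Or.inl (measure_ball_pos volume x ht).ne')
      (Or.inl measure_ball_lt_top.ne)).1 hratio
  have hnot_cover : ¬ ball x t ⊆ bad ∪ N := fun hcover => by
    have := (measure_mono (μ := volume) hcover).trans (measure_union_le bad N)
    rw [hN, add_zero] at this
    exact this.not_gt hbad
  obtain ⟨y, hy, hy_good⟩ := not_subset.1 hnot_cover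
  rw [mem_union, not_or] at hy_good
  refine ⟨y, ⟨ball_subset_ball htr.le hy, hy_good.2⟩, ?_⟩
  rw [dist_eq_norm]
  exact not_le.1 fun hfar => hy_good.1 ⟨hy, hfar⟩

theorem ApproxContAt.mem_closure_image_diff {x : Euc d} (hx : ApproxContAt f x)
    {U N : Set (Euc d)} (hU : IsOpen U) (hxU : x ∈ U) (hN : volume N = 0) :
    f x ∈ closure (f '' (U \ N)) := by
  obtain ⟨r, hr, hrU⟩ := Metric.isOpen_iff.1 hU x hxU
  refine Metric.mem_closure_iff.2 fun ε hε => ?_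
  obtain ⟨y, ⟨hy, hyN⟩, hyx⟩ := hx.exists_mem_ball_diff_dist_lt hN hr hε
  exact ⟨f y, mem_image_of_mem f ⟨hrU hy, hyN⟩, by rwa [dist_comm]⟩

end Euclidean

theorem clco_subset_clco_of_subset_closure {n : ℕ} {A B : Set (Euc n)} (h : A ⊆ closure B) :
    clco A ⊆ clco B :=
  closure_minimal (convexHull_min (h.trans (closure_mono (subset_convexHull ℝ B)))
    (convex_convexHull ℝ B).closure) isClosed_closure

theorem filippov_lemma1_intersection_general (d l : ℕ) (f : Euc d → Euc l)
    (hmeas : Measurable f) (hbdd : LocBdd f)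
    (Nf : Set (Euc d)) (hNf : Nf = {x : Euc d | ¬ ApproxContAt f x})
    (xbar : Euc d) (δ : ℝ) :
    clco (f '' (Metric.ball xbar δ \ Nf)) =
      ⋂ (N : Set (Euc d)) (_ : volume N = 0), clco (f '' (Metric.ball xbar δ \ N)) := by
  have hNf_null : volume Nf = 0 := hNf ▸ ae_iff.1 (ae_approxContAt (hbdd.locallyIntegrable hmeas))
  refine Subset.antisymm (subset_iInter₂ fun N hN => ?_) (iInter₂_subset Nf hNf_null)
  refine clco_subset_clco_of_subset_closure ?_
  rintro _ ⟨x, ⟨hx, hxNf⟩, rfl⟩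
  rw [hNf, mem_ofPred_eq, not_not] at hxNf
  exact hxNf.mem_closure_image_diff isOpen_ball hx hN

/-- Lemma 1, second part: the closed convex hull of the image of a ball minus
`N_f` equals the intersection, over all Lebesgue-null sets `N`, of the closed convex hulls of
the images of the ball minus `N`. -/
theorem filippov_lemma1_intersection (d l : ℕ) (f : Euc d → Euc l)
    (hmeas : Measurable f) (hbdd : LocBdd f)
    (Nf : Set (Euc d)) (hNf : Nf = {x : Euc d | ¬ ApproxContAt f x})
    (xbar : Euc d) (δ : ℝ) (hδ : 0 < δ) :
    clco (f '' (Metric.ball xbar δ \ Nf)) =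
      ⋂ (N : Set (Euc d)) (_ : volume N = 0), clco (f '' (Metric.ball xbar δ \ N)) :=
  filippov_lemma1_intersection_general d l f hmeas hbdd Nf hNf xbar δ
end
end

section
/- Let f : ℝ^d → ℝ^ℓ be a measurable and locally bounded function. Then there exists a (necessarily measurable) function f̄ : ℝ^d → ℝ^ℓ equal to f Lebesgue-almost everywhere such that F_f(x) = ⋂_{δ>0} clco f̄(B_δ(x)) for all x ∈ ℝ^d. -/
open MeasureTheory Metric Filter Set Topology

noncomputable section

/-!
Almost every `x` satisfies `f x ∈ F_f(x)`. The map `F_f` has a closed graph and is locally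
bounded, so it is upper semicontinuous with nonempty compact convex values; in particular its
minimal-norm selection `s` is Borel, because `x ↦ infEDist 0 (F_f(x) ∩ C)` is lower semicontinuous
for every closed `C`. Taking `f̄ = s` on a Borel null set containing the exceptional points and
`f̄ = f` elsewhere gives `f̄(y) ∈ F_f(y)` for all `y`, whence
`clco f̄(B_{δ/2}(x)) ⊆ clco f(B_δ(x) \ N)` for every null `N`; conversely `f̄ = f` off a null set
gives `F_f(x) ⊆ clco f̄(B_δ(x))`.
-/

section SetValued

variable {X E : Type*} [TopologicalSpace X]

/-- The tube lemma: near `x`, the values of `Φ` lie in `K` and avoid the compact set `K ∩ D`. -/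
theorem isClosed_setOf_inter_nonempty_of_isClosed_graph [TopologicalSpace E] {Φ : X → Set E}
    (hgraph : IsClosed {p : X × E | p.2 ∈ Φ p.1})
    (hloc : ∀ x, ∃ K, IsCompact K ∧ ∀ᶠ y in 𝓝 x, Φ y ⊆ K) {D : Set E} (hD : IsClosed D) :
    IsClosed {x | (Φ x ∩ D).Nonempty} := by
  refine isOpen_compl_iff.1 (isOpen_iff_mem_nhds.2 fun x hx => ?_)
  obtain ⟨K, hK, hΦK⟩ := hloc x
  have hout : ∀ v ∈ K ∩ D, ∀ᶠ p : X × E in 𝓝 (x, v), p.2 ∉ Φ p.1 := fun v hv =>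
    hgraph.isOpen_compl.mem_nhds fun hvx => hx ⟨v, hvx, hv.2⟩
  filter_upwards [(hK.inter_right hD).eventually_forall_of_forall_eventually
    (P := fun y v => v ∉ Φ y) hout, hΦK] with y hy hyK
  rintro ⟨v, hvy, hvD⟩
  exact hy v ⟨hyK hvy, hvD⟩ hvy

theorem lowerSemicontinuous_infEDist_of_isClosed_setOf_inter_nonempty [PseudoEMetricSpace E]
    {Φ : X → Set E} (hcpt : ∀ x, IsCompact (Φ x))
    (hhit : ∀ D, IsClosed D → IsClosed {x | (Φ x ∩ D).Nonempty}) (a : E) :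
    LowerSemicontinuous fun x => infEDist a (Φ x) := by
  refine lowerSemicontinuous_iff_isClosed_preimage.2 fun t => ?_
  rcases eq_or_ne t ⊤ with rfl | ht
  · simp
  convert hhit _ (isClosed_closedEBall (a := a) (r := t)) using 1
  ext x
  refine ⟨fun hx => ?_, fun ⟨v, hv, hva⟩ =>
    (infEDist_le_edist_of_mem hv).trans (by rwa [edist_comm])⟩
  have hne : (Φ x).Nonempty :=
    nonempty_iff_ne_empty.2 fun h => ht (top_le_iff.1 (by simpa [h] using hx))
  obtain ⟨v, hv, hdist⟩ := (hcpt x).exists_infEDist_eq_edist hne a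
  exact ⟨v, hv, by rw [mem_closedEBall, edist_comm, ← hdist]; exact hx⟩

theorem eq_of_isMinOn_norm_of_norm_le [NormedAddCommGroup E] [NormedSpace ℝ E]
    [StrictConvexSpace ℝ E] {K : Set E} (hK : Convex ℝ K) {v w : E} (hv : v ∈ K)
    (hvmin : IsMinOn (‖·‖) K v) (hw : w ∈ K) (hwv : ‖w‖ ≤ ‖v‖) : w = v := by
  by_contra hne
  have hmid : (1 / 2 : ℝ) • w + (1 / 2 : ℝ) • v ∈ K :=
    hK hw hv (by norm_num) (by norm_num) (by norm_num)
  exact (hvmin hmid).not_gt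
    (norm_combo_lt_of_ne hwv le_rfl hne (by norm_num) (by norm_num) (by norm_num))

theorem exists_measurable_selection_of_isClosed_setOf_inter_nonempty [MeasurableSpace X]
    [OpensMeasurableSpace X] [NormedAddCommGroup E] [NormedSpace ℝ E] [StrictConvexSpace ℝ E]
    [MeasurableSpace E] [BorelSpace E] {Φ : X → Set E} (hne : ∀ x, (Φ x).Nonempty)
    (hcpt : ∀ x, IsCompact (Φ x)) (hconv : ∀ x, Convex ℝ (Φ x))
    (hhit : ∀ D, IsClosed D → IsClosed {x | (Φ x ∩ D).Nonempty}) :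
    ∃ s : X → E, Measurable s ∧ ∀ x, s x ∈ Φ x := by
  choose s hsΦ hsmin using fun x => (hcpt x).exists_isMinOn (hne x) continuous_norm.continuousOn
  refine ⟨s, measurable_of_isClosed fun C hC => ?_, hsΦ⟩
  have hhitC : ∀ D, IsClosed D → IsClosed {x | (Φ x ∩ C ∩ D).Nonempty} := fun D hD => by
    simpa only [inter_assoc] using hhit _ (hC.inter hD)
  have hedist : ∀ v w : E, edist 0 v ≤ edist 0 w ↔ ‖v‖ ≤ ‖w‖ := fun v w => by
    simp [edist_zero_left, ← NNReal.coe_le_coe]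
  have hinf : ∀ x, infEDist 0 (Φ x) = edist 0 (s x) := fun x =>
    le_antisymm (infEDist_le_edist_of_mem (hsΦ x)) <|
      le_infEDist.2 fun v hv => (hedist _ _).2 (hsmin x hv)
  -- By uniqueness of the minimal-norm point, `s x ∈ C` iff `Φ x ∩ C` has a point of no larger norm.
  have hpre : s ⁻¹' C = {x | infEDist 0 (Φ x ∩ C) ≤ infEDist 0 (Φ x)} := by
    ext x
    simp only [mem_preimage, mem_ofPred_eq, hinf]
    refine ⟨fun hx => infEDist_le_edist_of_mem ⟨hsΦ x, hx⟩, fun hx => ?_⟩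
    have hneC : (Φ x ∩ C).Nonempty := nonempty_iff_ne_empty.2 fun h => by
      simp [h] at hx
    obtain ⟨v, hv, hvdist⟩ := ((hcpt x).inter_right hC).exists_infEDist_eq_edist hneC 0
    have hvle : ‖v‖ ≤ ‖s x‖ := (hedist _ _).1 (hvdist ▸ hx)
    exact eq_of_isMinOn_norm_of_norm_le (hconv x) (hsΦ x) (hsmin x) hv.1 hvle ▸ hv.2
  rw [hpre]
  exact measurableSet_le
    (lowerSemicontinuous_infEDist_of_isClosed_setOf_inter_nonempty
      (fun x => (hcpt x).inter_right hC) hhitC 0).measurable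
    (lowerSemicontinuous_infEDist_of_isClosed_setOf_inter_nonempty hcpt hhit 0).measurable

end SetValued

section Clco

variable {n : ℕ}

theorem subset_clco (A : Set (Euc n)) : A ⊆ clco A :=
  (subset_convexHull ℝ A).trans subset_closure

theorem clco_mono {A B : Set (Euc n)} (h : A ⊆ B) : clco A ⊆ clco B :=
  closure_mono (convexHull_mono h)

theorem isClosed_clco (A : Set (Euc n)) : IsClosed (clco A) :=
  isClosed_closure

theorem convex_clco (A : Set (Euc n)) : Convex ℝ (clco A) :=
  (convex_convexHull ℝ A).closure

theorem clco_subset {A C : Set (Euc n)} (h : A ⊆ C) (hconv : Convex ℝ C) (hC : IsClosed C) :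
    clco A ⊆ C :=
  closure_minimal (convexHull_min h hconv) hC

end Clco

section Filippov

variable {d l : ℕ} {f : Euc d → Euc l}

theorem mem_filippovReg_iff {x : Euc d} {z : Euc l} :
    z ∈ FilippovReg f x ↔
      ∀ N : Set (Euc d), volume N = 0 → ∀ δ : ℝ, 0 < δ → z ∈ clco (f '' (ball x δ \ N)) := by
  simp [FilippovReg]

theorem filippovReg_subset_of_ball_subset {x y : Euc d} {N : Set (Euc d)} (hN : volume N = 0)
    {r δ : ℝ} (hr : 0 < r) (h : ball y r ⊆ ball x δ) :
    FilippovReg f y ⊆ clco (f '' (ball x δ \ N)) := fun _ hz =>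
  clco_mono (image_mono (sdiff_subset_sdiff_left h)) (mem_filippovReg_iff.1 hz N hN r hr)

theorem convex_filippovReg (x : Euc d) : Convex ℝ (FilippovReg f x) :=
  convex_iInter₂ fun _ _ => convex_iInter₂ fun _ _ => convex_clco _

theorem isClosed_graph_filippovReg : IsClosed {p : Euc d × Euc l | p.2 ∈ FilippovReg f p.1} := by
  refine isClosed_iff_frequently.2 fun ⟨x, v⟩ hfreq => mem_filippovReg_iff.2 fun N hN δ hδ => ?_
  have hnear : ∀ᶠ p : Euc d × Euc l in 𝓝 (x, v), p.1 ∈ ball x (δ / 2) :=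
    continuous_fst.continuousAt.preimage_mem_nhds (ball_mem_nhds x (half_pos hδ))
  refine (isClosed_clco _).mem_of_frequently_of_tendsto
    ((hfreq.and_eventually hnear).mono ?_) continuous_snd.continuousAt
  rintro ⟨y, w⟩ ⟨hw, hy⟩
  exact filippovReg_subset_of_ball_subset hN (half_pos hδ)
    (ball_subset_ball' (by linarith [mem_ball.1 hy])) hw

theorem exists_eventually_filippovReg_subset_closedBall (hbdd : LocBdd f) (x : Euc d) :
    ∃ C : ℝ, ∀ᶠ y in 𝓝 x, FilippovReg f y ⊆ closedBall 0 C := by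
  obtain ⟨δ, hδ, C, hC⟩ := hbdd x
  have hfC : f '' (ball x δ \ ∅) ⊆ closedBall 0 C := by
    rintro _ ⟨z, ⟨hz, -⟩, rfl⟩
    exact mem_closedBall_zero_iff.2 (hC z hz)
  refine ⟨C, eventually_of_mem (ball_mem_nhds x (half_pos hδ)) fun y hy => ?_⟩
  exact (filippovReg_subset_of_ball_subset measure_empty (half_pos hδ)
    (ball_subset_ball' (by linarith [mem_ball.1 hy]))).trans
    (clco_subset hfC (convex_closedBall 0 C) isClosed_closedBall)

theorem isCompact_filippovReg (hbdd : LocBdd f) (x : Euc d) : IsCompact (FilippovReg f x) := by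
  obtain ⟨C, hC⟩ := exists_eventually_filippovReg_subset_closedBall hbdd x
  exact (isCompact_closedBall 0 C).of_isClosed_subset
    (isClosed_graph_filippovReg.preimage (continuous_const.prodMk continuous_id)) hC.self_of_nhds

theorem isClosed_setOf_filippovReg_inter_nonempty (hbdd : LocBdd f) {D : Set (Euc l)}
    (hD : IsClosed D) : IsClosed {x | (FilippovReg f x ∩ D).Nonempty} :=
  isClosed_setOf_inter_nonempty_of_isClosed_graph isClosed_graph_filippovReg (fun x => by
    obtain ⟨C, hC⟩ := exists_eventually_filippovReg_subset_closedBall hbdd x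
    exact ⟨_, isCompact_closedBall 0 C, hC⟩) hD

/-- If `f x ∉ F_f(x)`, some neighbourhood of `(x, f x)` is null for the push-forward of `volume`
along `x ↦ (x, f x)`; by second countability the set of all such graph points is then null. -/
theorem ae_mem_filippovReg (hf : Measurable f) : ∀ᵐ x ∂volume, f x ∈ FilippovReg f x := by
  set g : Euc d → Euc d × Euc l := fun x => (x, f x)
  have hg : Measurable g := measurable_id.prodMk hf
  refine ae_iff.2 (measure_mono_null (subset_preimage_image g _)
    (nonpos_iff_eq_zero.1 ((Measure.le_map_apply hg.aemeasurable _).trans_eq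
      (measure_null_of_locally_null _ ?_))))
  rintro _ ⟨x, hx, rfl⟩
  obtain ⟨N, hN, δ, hδ, hxK⟩ :
      ∃ N : Set (Euc d), volume N = 0 ∧ ∃ δ : ℝ, 0 < δ ∧ f x ∉ clco (f '' (ball x δ \ N)) := by
    simpa [mem_filippovReg_iff] using hx
  have hU : IsOpen (ball x δ ×ˢ (clco (f '' (ball x δ \ N)))ᶜ) :=
    isOpen_ball.prod (isClosed_clco _).isOpen_compl
  refine ⟨_, mem_nhdsWithin_of_mem_nhds (hU.mem_nhds ⟨mem_ball_self hδ, hxK⟩), ?_⟩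
  rw [Measure.map_apply hg hU.measurableSet]
  refine measure_mono_null (fun y ⟨hy, hyK⟩ => ?_) hN
  by_contra hyN
  exact hyK (subset_clco _ (mem_image_of_mem f ⟨hy, hyN⟩))

theorem filippovReg_nonempty (hf : Measurable f) (hbdd : LocBdd f) (x : Euc d) :
    (FilippovReg f x).Nonempty := by
  have hdense : Dense {x | (FilippovReg f x ∩ univ).Nonempty} :=
    (Measure.dense_of_ae (ae_mem_filippovReg hf)).mono fun y hy => ⟨f y, hy, trivial⟩
  have hall : {x | (FilippovReg f x ∩ univ).Nonempty} = univ := by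
    rw [← (isClosed_setOf_filippovReg_inter_nonempty hbdd isClosed_univ).closure_eq,
      hdense.closure_eq]
  simpa using eq_univ_iff_forall.1 hall x

theorem exists_measurable_selection_filippovReg (hf : Measurable f) (hbdd : LocBdd f) :
    ∃ s : Euc d → Euc l, Measurable s ∧ ∀ x, s x ∈ FilippovReg f x :=
  exists_measurable_selection_of_isClosed_setOf_inter_nonempty (filippovReg_nonempty hf hbdd)
    (isCompact_filippovReg hbdd) convex_filippovReg
    fun _ hD => isClosed_setOf_filippovReg_inter_nonempty hbdd hD

theorem filippovReg_eq_iInter_clco_image {g : Euc d → Euc l} {N₀ : Set (Euc d)}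
    (hN₀ : volume N₀ = 0) (hgf : EqOn g f N₀ᶜ) (hg : ∀ y, g y ∈ FilippovReg f y) (x : Euc d) :
    FilippovReg f x = ⋂ (δ : ℝ) (_ : 0 < δ), clco (g '' ball x δ) := by
  refine Subset.antisymm (subset_iInter₂ fun δ hδ => ?_) fun z hz => ?_
  · refine (filippovReg_subset_of_ball_subset hN₀ hδ subset_rfl).trans (clco_mono ?_)
    rintro _ ⟨y, ⟨hy, hyN⟩, rfl⟩
    exact ⟨y, hy, hgf hyN⟩
  · refine mem_filippovReg_iff.2 fun N hN δ hδ => clco_subset ?_ (convex_clco _) (isClosed_clco _)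
      (mem_iInter₂.1 hz (δ / 2) (half_pos hδ))
    rintro _ ⟨y, hy, rfl⟩
    exact filippovReg_subset_of_ball_subset hN (half_pos hδ)
      (ball_subset_ball' (by linarith [mem_ball.1 hy])) (hg y)

end Filippov

/-- Proposition (iv): there is a (necessarily measurable) function `f̄` equal to
`f` almost everywhere such that `F_f` is the Krasovskii-type regularization of `f̄`. -/
theorem filippovReg_eq_krasovskii_of_modification (d l : ℕ) (f : Euc d → Euc l)
    (hmeas : Measurable f) (hbdd : LocBdd f) :
    ∃ fbar : Euc d → Euc l, Measurable fbar ∧ fbar =ᵐ[volume] f ∧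
      ∀ x : Euc d, FilippovReg f x =
        ⋂ (δ : ℝ) (_ : 0 < δ), clco (fbar '' Metric.ball x δ) := by
  classical
  obtain ⟨s, hs, hsF⟩ := exists_measurable_selection_filippovReg hmeas hbdd
  obtain ⟨N₀, hbad, hN₀, hN₀null⟩ :=
    exists_measurable_superset_of_null (ae_iff.1 (ae_mem_filippovReg hmeas))
  have hEq : EqOn (N₀.piecewise s f) f N₀ᶜ := fun y hy => piecewise_eq_of_notMem _ _ _ hy
  have hmem : ∀ y, N₀.piecewise s f y ∈ FilippovReg f y := fun y => by
    by_cases hy : y ∈ N₀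
    · simpa [hy] using hsF y
    · exact hEq hy ▸ not_not.1 fun h => hy (hbad h)
  exact ⟨N₀.piecewise s f, hs.piecewise hN₀ hmeas,
    eventuallyEq_of_mem (compl_mem_ae_iff.2 hN₀null) hEq,
    filippovReg_eq_iInter_clco_image hN₀null hEq hmem⟩
end
end
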